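/- In the group G_4 = ⟨s, t ∣ s³ = t³ = 1, sts = tst⟩, the double coset ⟨s⟩t⟨s⟩ is additive: the minimal word lengths satisfy l(s^i t s^j) = 1 + i + j for all 0 ≤ i, j ≤ 2, where l is the minimal number of generators from {s, t} (with positive exponents) needed to express an element. -/

import Mathlib

def G4rels : Set (FreeGroup (Fin 2)) :=
  { (FreeGroup.of 0) ^ 3, (FreeGroup.of 1) ^ 3,
    (FreeGroup.of 0 * FreeGroup.of 1 * FreeGroup.of 0) *
      (FreeGroup.of 1 * FreeGroup.of 0 * FreeGroup.of 1)⁻¹ }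

abbrev G4 : Type := PresentedGroup G4rels

def s : G4 := PresentedGroup.of 0
def t : G4 := PresentedGroup.of 1

/-- The set of word lengths of g over the generating set {s, t}
(only positive powers of generators allowed). -/
def wordLengths (g : G4) : Set ℕ :=
  {n : ℕ | ∃ w : List G4, (∀ x ∈ w, x = s ∨ x = t) ∧ w.length = n ∧ w.prod = g}

/-- The group of invertible 2×2 matrices over ℤ/3, target of a faithful
representation of G₄ (which is isomorphic to SL(2,3)). -/
abbrev M : Type := (Matrix (Fin 2) (Fin 2) (ZMod 3))ˣ

def S : M := ⟨!![1,1;0,1], !![1,2;0,1], by decide, by decide⟩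
def T : M := ⟨!![1,0;2,1], !![1,0;1,1], by decide, by decide⟩

def fST : Fin 2 → M := ![S, T]

lemma rels_hold : ∀ r ∈ G4rels, FreeGroup.lift fST r = 1 := by
  rintro r (rfl | rfl | rfl) <;>
    simp [map_mul, map_pow, map_inv, FreeGroup.lift_apply_of, fST] <;> decide

def φ : G4 →* M := PresentedGroup.toGroup rels_hold

lemma φs : φ s = S := PresentedGroup.toGroup.of rels_hold
lemma φt : φ t = T := PresentedGroup.toGroup.of rels_hold

/-- All products of words of length n over {S, T}. -/
def P : ℕ → List M
  | 0 => [1]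
  | n + 1 => (P n).map (S * ·) ++ (P n).map (T * ·)

lemma mem_P : ∀ w : List G4, (∀ x ∈ w, x = s ∨ x = t) → φ w.prod ∈ P w.length := by
  intro w
  induction w with
  | nil => intro _; simp [P]
  | cons a w ih =>
    intro h
    have hw : ∀ x ∈ w, x = s ∨ x = t := fun x hx => h x (List.mem_cons_of_mem a hx)
    have hmem := ih hw
    rcases h a List.mem_cons_self with rfl | rfl <;>
      simp only [List.prod_cons, map_mul, φs, φt, List.length_cons, P,
        List.mem_append, List.mem_map]
    · exact Or.inl ⟨_, hmem, rfl⟩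
    · exact Or.inr ⟨_, hmem, rfl⟩

/-- The double coset ⟨s⟩t⟨s⟩ in G₄ is additive: l(sⁱ t sʲ) = 1 + i + j
for all 0 ≤ i, j ≤ 2. -/
theorem additive_coset_t (i j : ℕ) (hi : i ≤ 2) (hj : j ≤ 2) :
    IsLeast (wordLengths (s ^ i * t * s ^ j)) (1 + i + j) := by
  constructor
  · refine ⟨List.replicate i s ++ t :: List.replicate j s, ?_, ?_, ?_⟩
    · intro x hx
      rcases List.mem_append.1 hx with h | h
      · exact Or.inl (List.eq_of_mem_replicate h)
      · rcases List.mem_cons.1 h with h | h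
        · exact Or.inr h
        · exact Or.inl (List.eq_of_mem_replicate h)
    · simp; omega
    · simp [List.prod_replicate, mul_assoc]
  · rintro n ⟨w, hw, hlen, hprod⟩
    by_contra hn
    push_neg at hn
    have hm := mem_P w hw
    rw [hlen, hprod] at hm
    have hφ : (S ^ i * T * S ^ j) ∈ P n := by
      simpa [map_mul, map_pow, φs, φt] using hm
    interval_cases i <;> interval_cases j <;> interval_cases n <;>
      revert hφ <;> decide
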